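/- Fix an integer k ≥ 2 and a positive integer ν. Let J_{k,ν}(U) denote the number of 2ν-tuples (u₁, …, u_{2ν}) of integers with 1 ≤ u_i ≤ U satisfying 1/u₁^k + ⋯ + 1/u_ν^k = 1/u_{ν+1}^k + ⋯ + 1/u_{2ν}^k. Then for every ε > 0, J_{k,ν}(U) ≤ C(k,ν,ε) U^{ν+ε} for all U ≥ 1. -/

import Mathlib

/-!
If `∑_{i ≤ ν} u_i^{-k} = ∑_{i > ν} u_i^{-k}`, then `n = ∏ u_i` is squarefull: a prime dividing `n`
exactly once divides exactly one `u_j`, and multiplying the equation by `n^k` leaves a congruence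
modulo `p` in which only the term coming from `u_j` is not divisible by `p`. A squarefull `n` is
`b ^ 2 * a` with `a ∣ b`, so there are at most `∑_{b ≤ √X} d(b)` of them up to `X`, and each `n`
is the product of at most `d(n)^{2ν}` tuples. With `X = U^{2ν}` and `d(n) ≪_δ n^δ` this gives
`J_{k,ν}(U) ≪ U^ν · U^{O(ν²δ)}`.
-/

open Finset

namespace Nat

def Squarefull (n : ℕ) : Prop := ∀ p ∈ n.primeFactors, p ^ 2 ∣ n

instance : DecidablePred Squarefull := fun n =>
  inferInstanceAs (Decidable (∀ p ∈ n.primeFactors, p ^ 2 ∣ n))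

theorem Squarefull.dvd_of_sq_mul {a b : ℕ} (h : (b ^ 2 * a).Squarefull) (ha : Squarefree a)
    (hb : b ≠ 0) : a ∣ b := by
  rw [← prod_primeFactors_of_squarefree ha, prod_primeFactors_dvd_iff hb]
  intro p hpa
  have hp := prime_of_mem_primeFactors hpa
  refine mem_primeFactors_of_ne_zero hb |>.2 ⟨hp, by_contra fun hpb => ?_⟩
  have hp2 : p ^ 2 ∣ b ^ 2 * a := h p <| mem_primeFactors.2
    ⟨hp, dvd_mul_of_dvd_right (dvd_of_mem_primeFactors hpa) _,
      mul_ne_zero (pow_ne_zero 2 hb) ha.ne_zero⟩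
  have hcop : Coprime (p ^ 2) (b ^ 2) := ((hp.coprime_iff_not_dvd).2 hpb).pow 2 2
  exact squarefree_iff_prime_squarefree.1 ha p hp (sq p ▸ hcop.dvd_of_dvd_mul_left hp2)

/-- Writing `n = b ^ 2 * a` with `a` squarefree, `n` squarefull forces `a ∣ b`, so `n` is
determined by the pair `(b, a)` with `b ≤ √X` and `a ∣ b`. -/
theorem card_filter_squarefull_le_sum_card_divisors (X : ℕ) :
    #{n ∈ Icc 1 X | n.Squarefull} ≤ ∑ m ∈ Icc 1 X.sqrt, #m.divisors := by
  choose a b hab ha using sq_mul_squarefree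
  rw [← Finset.card_sigma]
  refine card_le_card_of_injOn (fun n => ⟨b n, a n⟩) (fun n hn => ?_) (fun n _ n' _ hnn' => ?_)
  · obtain ⟨⟨hn1, hnX⟩, hsq⟩ := by simpa only [coe_filter, mem_Icc] using hn
    have hb : b n ≠ 0 := fun h => by
      have := hab n
      simp only [h, ne_eq, OfNat.ofNat_ne_zero, not_false_eq_true, zero_pow, zero_mul] at this
      omega
    have hbX : b n ^ 2 ≤ X :=
      (Nat.le_mul_of_pos_right _ (pos_of_ne_zero (ha n).ne_zero)).trans ((hab n).le.trans hnX)
    rw [← hab n] at hsq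
    simp only [coe_sigma, Set.mem_sigma_iff, coe_Icc, Set.mem_Icc, mem_coe, mem_divisors]
    exact ⟨⟨Nat.one_le_iff_ne_zero.2 hb, le_sqrt'.2 hbX⟩, hsq.dvd_of_sq_mul (ha n) hb, hb⟩
  · simp only [Sigma.mk.inj_iff, heq_eq_eq] at hnn'
    rw [← hab n, ← hab n', hnn'.1, hnn'.2]

theorem dvd_of_sum_eq_sum {ι : Type*} {s t : Finset ι} {g : ι → ℕ} {p : ℕ} {j : ι}
    (hjs : j ∈ s) (hjt : j ∉ t) (h : ∑ i ∈ s, g i = ∑ i ∈ t, g i) (hp : ∀ i ≠ j, p ∣ g i) :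
    p ∣ g j := by
  classical
  have hrest : p ∣ ∑ i ∈ s.erase j, g i := dvd_sum fun i hi => hp i (ne_of_mem_erase hi)
  have htotal : p ∣ g j + ∑ i ∈ s.erase j, g i := by
    rw [add_sum_erase s g hjs, h]
    exact dvd_sum fun i hi => hp i (ne_of_mem_of_not_mem hi hjt)
  exact (Nat.dvd_add_left hrest).1 htotal

/-- If the prime `p` divided `∏ u` exactly once, say through `u j`, then clearing denominators
gives `∑_{i ∈ s} m i ^ k = ∑_{i ∉ s} m i ^ k` with `m i = ∏_{l ≠ i} u l`, where `p` divides every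
`m i` except `m j`. -/
theorem squarefull_prod_of_sum_one_div_pow_eq {ι : Type*} [Fintype ι] [DecidableEq ι]
    {s : Finset ι} {u : ι → ℕ} {k : ℕ} (hk : k ≠ 0) (hu : ∀ i, u i ≠ 0)
    (h : ∑ i ∈ s, (1 : ℚ) / (u i : ℚ) ^ k = ∑ i ∈ sᶜ, (1 : ℚ) / (u i : ℚ) ^ k) :
    (∏ i, u i).Squarefull := by
  intro p hpu
  have hp := prime_of_mem_primeFactors hpu
  obtain ⟨j, -, hpj⟩ := hp.prime.exists_mem_finset_dvd (dvd_of_mem_primeFactors hpu)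
  by_contra hp2
  set m : ι → ℕ := fun i => ∏ l ∈ univ.erase i, u l
  have hum : ∀ i, u i * m i = ∏ l, u l := fun i => mul_prod_erase _ _ (mem_univ i)
  have hdvd_m : ∀ i l, i ≠ l → u i ∣ m l := fun i l hil =>
    dvd_prod_of_mem u (mem_erase.2 ⟨hil, mem_univ i⟩)
  have hpi : ∀ i ≠ j, ¬p ∣ u i := fun i hij hpi =>
    hp2 (sq p ▸ hum j ▸ mul_dvd_mul hpj (hpi.trans (hdvd_m i j hij)))
  have hpm : ∀ i ≠ j, p ∣ m i ^ k := fun i hij =>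
    dvd_pow (hpj.trans (hdvd_m j i (Ne.symm hij))) hk
  have hpmj : ¬p ∣ m j := fun hpmj => by
    obtain ⟨i, hi, hpi'⟩ := hp.prime.exists_mem_finset_dvd hpmj
    exact hpi i (ne_of_mem_erase hi) hpi'
  have hsum : ∑ i ∈ s, m i ^ k = ∑ i ∈ sᶜ, m i ^ k := by
    have hm : ∀ i, (m i : ℚ) ^ k = ((∏ l, u l : ℕ) : ℚ) ^ k * (1 / (u i : ℚ) ^ k) := fun i => by
      rw [← hum i]
      have : (u i : ℚ) ≠ 0 := by exact_mod_cast hu i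
      field_simp
      push_cast
      ring
    exact_mod_cast (by simp only [Nat.cast_sum, Nat.cast_pow, hm, ← mul_sum, h] :
      ((∑ i ∈ s, m i ^ k : ℕ) : ℚ) = ((∑ i ∈ sᶜ, m i ^ k : ℕ) : ℚ))
  refine hpmj (hp.dvd_of_dvd_pow (n := k) ?_)
  by_cases hjs : j ∈ s
  · exact dvd_of_sum_eq_sum (g := fun i => m i ^ k) hjs (notMem_compl.2 hjs) hsum hpm
  · exact dvd_of_sum_eq_sum (g := fun i => m i ^ k) (mem_compl.2 hjs) (by simpa using hjs)
      hsum.symm hpm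

end Nat

theorem card_filter_prod_eq_le {ι : Type*} [Fintype ι] (A : Finset (ι → ℕ)) {n : ℕ} (hn : n ≠ 0) :
    #{u ∈ A | ∏ i, u i = n} ≤ #n.divisors ^ Fintype.card ι := by
  classical
  rw [← Finset.card_univ, ← prod_const, ← Fintype.card_piFinset]
  refine card_le_card fun u hu => Fintype.mem_piFinset.2 fun i => Nat.mem_divisors.2 ⟨?_, hn⟩
  exact (mem_filter.1 hu).2 ▸ dvd_prod_of_mem u (mem_univ i)

theorem card_filter_sum_one_div_pow_eq_le_sum {ι : Type*} [Fintype ι] [DecidableEq ι]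
    (s : Finset ι) {k : ℕ} (hk : k ≠ 0) (U : ℕ) :
    #{u ∈ Fintype.piFinset fun _ : ι => Icc 1 U |
        ∑ i ∈ s, (1 : ℚ) / (u i : ℚ) ^ k = ∑ i ∈ sᶜ, (1 : ℚ) / (u i : ℚ) ^ k}
      ≤ ∑ n ∈ Icc 1 (U ^ Fintype.card ι) with n.Squarefull, #n.divisors ^ Fintype.card ι := by
  rw [card_eq_sum_card_fiberwise (f := fun u => ∏ i, u i) fun u hu => ?_]
  · refine sum_le_sum fun n hn => card_filter_prod_eq_le _ ?_
    exact Nat.one_le_iff_ne_zero.1 (mem_Icc.1 (mem_filter.1 hn).1).1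
  · obtain ⟨hU, h⟩ := mem_filter.1 hu
    have hb : ∀ i, 1 ≤ u i ∧ u i ≤ U := fun i => mem_Icc.1 (Fintype.mem_piFinset.1 hU i)
    refine mem_filter.2 ⟨mem_Icc.2 ⟨one_le_prod' fun i _ => (hb i).1, ?_⟩,
      Nat.squarefull_prod_of_sum_one_div_pow_eq hk (fun i => Nat.one_le_iff_ne_zero.1 (hb i).1) h⟩
    simpa using prod_le_pow_card univ u U fun i _ => (hb i).2

theorem card_filter_sum_one_div_pow_eq_le {ι : Type*} [Fintype ι] [DecidableEq ι]
    (s : Finset ι) {k : ℕ} (hk : k ≠ 0) (U : ℕ) {D : ℝ} (hD0 : 0 ≤ D)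
    (hD : ∀ n ∈ Icc 1 (U ^ Fintype.card ι), (#n.divisors : ℝ) ≤ D) :
    (#{u ∈ Fintype.piFinset fun _ : ι => Icc 1 U |
        ∑ i ∈ s, (1 : ℚ) / (u i : ℚ) ^ k = ∑ i ∈ sᶜ, (1 : ℚ) / (u i : ℚ) ^ k} : ℝ)
      ≤ (U ^ Fintype.card ι).sqrt * D ^ (Fintype.card ι + 1) := by
  set X := U ^ Fintype.card ι
  have hD' : ∀ m ∈ Icc 1 X.sqrt, (#m.divisors : ℝ) ≤ D := fun m hm =>
    hD m (Icc_subset_Icc_right (Nat.sqrt_le_self X) hm)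
  calc _ ≤ ((∑ n ∈ Icc 1 X with n.Squarefull, #n.divisors ^ Fintype.card ι : ℕ) : ℝ) := by
        exact_mod_cast card_filter_sum_one_div_pow_eq_le_sum s hk U
    _ ≤ #{n ∈ Icc 1 X | n.Squarefull} * D ^ Fintype.card ι := by
        push_cast
        rw [← nsmul_eq_mul, ← sum_const]
        exact sum_le_sum fun n hn =>
          pow_le_pow_left₀ (Nat.cast_nonneg _) (hD n (mem_filter.1 hn).1) _
    _ ≤ (∑ m ∈ Icc 1 X.sqrt, #m.divisors : ℕ) * D ^ Fintype.card ι := by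
        gcongr
        exact Nat.card_filter_squarefull_le_sum_card_divisors X
    _ ≤ X.sqrt * D * D ^ Fintype.card ι := by
        gcongr
        push_cast
        simpa using sum_le_card_nsmul _ _ _ hD'
    _ = X.sqrt * D ^ (Fintype.card ι + 1) := by ring

theorem add_one_le_max_inv_mul_pow {a : ℝ} (ha : 0 < a) (e : ℕ) :
    (e + 1 : ℝ) ≤ max 1 a⁻¹ * (1 + a) ^ e := by
  calc (e + 1 : ℝ) ≤ max 1 a⁻¹ * (1 + e * a) := by
        rcases le_total 1 a with h | h
        · rw [max_eq_left (inv_le_one_of_one_le₀ h)]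
          nlinarith
        · rw [max_eq_right ((one_le_inv₀ ha).2 h), mul_add, mul_one, mul_comm (e : ℝ) a,
            inv_mul_cancel_left₀ ha.ne']
          linarith [(one_le_inv₀ ha).2 h]
    _ ≤ max 1 a⁻¹ * (1 + a) ^ e := by
        gcongr
        exact one_add_mul_le_pow (by linarith) e

theorem Nat.rpow_eq_prod_primeFactors {n : ℕ} (hn : n ≠ 0) (δ : ℝ) :
    (n : ℝ) ^ δ = ∏ p ∈ n.primeFactors, ((p : ℝ) ^ δ) ^ n.factorization p := by
  conv_lhs => rw [← Nat.prod_factorization_pow_eq_self hn, prod_factorization_eq_prod_primeFactors]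
  push_cast
  rw [← Real.finsetProd_rpow _ _ fun p _ => by positivity]
  exact prod_congr rfl fun p _ => (Real.rpow_pow_comm (Nat.cast_nonneg p) δ _).symm

/-- Since `(e + 1) / p ^ (e * δ) ≤ 1` as soon as `p ^ δ ≥ 2`, only the finitely many primes
`p < 2 ^ δ⁻¹` contribute to the constant. -/
theorem Nat.exists_card_divisors_le_mul_rpow {δ : ℝ} (hδ : 0 < δ) :
    ∃ C : ℝ, 0 < C ∧ ∀ n : ℕ, n ≠ 0 → (#n.divisors : ℝ) ≤ C * (n : ℝ) ^ δ := by
  set g : ℕ → ℝ := fun p => max 1 ((p : ℝ) ^ δ - 1)⁻¹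
  have hg : ∀ p, 1 ≤ g p := fun p => le_max_left _ _
  obtain ⟨T, hT⟩ : ∃ T : ℕ, ∀ p, T ≤ p → g p = 1 := by
    refine ⟨⌈(2 : ℝ) ^ δ⁻¹⌉₊, fun p hp => max_eq_left (inv_le_one_of_one_le₀ ?_)⟩
    have : 2 ≤ (p : ℝ) ^ δ :=
      (Real.rpow_inv_le_iff_of_pos zero_le_two (Nat.cast_nonneg p) hδ).1 (Nat.ceil_le.1 hp)
    linarith
  refine ⟨∏ p ∈ range T, g p, prod_pos fun p _ => zero_lt_one.trans_le (hg p), fun n hn => ?_⟩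
  calc (#n.divisors : ℝ) = ∏ p ∈ n.primeFactors, ((n.factorization p : ℝ) + 1) := by
        rw [Nat.card_divisors hn]
        push_cast
        rfl
    _ ≤ ∏ p ∈ n.primeFactors, g p * ((p : ℝ) ^ δ) ^ n.factorization p := by
        refine prod_le_prod (fun _ _ => by positivity) fun p hp => ?_
        have hp1 : 1 < (p : ℝ) ^ δ :=
          Real.one_lt_rpow (by exact_mod_cast (prime_of_mem_primeFactors hp).one_lt) hδ
        simpa using add_one_le_max_inv_mul_pow (sub_pos.2 hp1) (n.factorization p)
    _ = (∏ p ∈ n.primeFactors, g p) * (n : ℝ) ^ δ := by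
        rw [prod_mul_distrib, Nat.rpow_eq_prod_primeFactors hn]
    _ ≤ (∏ p ∈ range T, g p) * (n : ℝ) ^ δ := by
        refine mul_le_mul_of_nonneg_right ?_ (by positivity)
        calc ∏ p ∈ n.primeFactors, g p = ∏ p ∈ n.primeFactors ∩ range T, g p :=
              (prod_subset inter_subset_left fun p _ hp => hT p (by simp_all)).symm
          _ ≤ ∏ p ∈ range T, g p := prod_le_prod_of_subset_of_one_le inter_subset_right
              (fun p _ => zero_le_one.trans (hg p)) fun p _ _ => hg p

theorem Nat.card_divisors_le_mul_rpow_of_mem_Icc {C δ : ℝ} (hC : 0 ≤ C) (hδ : 0 ≤ δ)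
    (hd : ∀ n : ℕ, n ≠ 0 → (#n.divisors : ℝ) ≤ C * (n : ℝ) ^ δ) {n X : ℕ} (hn : n ∈ Icc 1 X) :
    (#n.divisors : ℝ) ≤ C * (X : ℝ) ^ δ := by
  obtain ⟨hn1, hnX⟩ := mem_Icc.1 hn
  calc (#n.divisors : ℝ) ≤ C * (n : ℝ) ^ δ := hd n (by omega)
    _ ≤ C * (X : ℝ) ^ δ := by gcongr

theorem pow_mul_mul_rpow_pow_le {x C δ ε : ℝ} (hx : 1 ≤ x) (hC : 0 ≤ C) {a b m : ℕ}
    (h : b * δ * m ≤ ε) :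
    x ^ a * (C * (x ^ b) ^ δ) ^ m ≤ C ^ m * x ^ (a + ε) := by
  have hx0 : 0 ≤ x := zero_le_one.trans hx
  calc x ^ a * (C * (x ^ b) ^ δ) ^ m = C ^ m * (x ^ (a : ℝ) * x ^ (b * δ * m)) := by
        rw [mul_pow, ← Real.rpow_natCast x b, ← Real.rpow_mul hx0, ← Real.rpow_mul_natCast hx0,
          Real.rpow_natCast]
        ring
    _ ≤ C ^ m * x ^ (a + ε) := by
        rw [← Real.rpow_add (by linarith)]
        gcongr

theorem reciprocal_equation_count_general (k ν : ℕ) (hk : 2 ≤ k) :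
    ∀ ε : ℝ, 0 < ε → ∃ C : ℝ, 0 < C ∧ ∀ U : ℕ, 1 ≤ U →
      (Nat.card {u : Fin (2 * ν) → ℕ //
          (∀ i, 1 ≤ u i ∧ u i ≤ U) ∧
          ∑ i ∈ Finset.univ.filter (fun i : Fin (2 * ν) => (i : ℕ) < ν),
              (1 : ℚ) / (u i : ℚ) ^ k
            = ∑ i ∈ Finset.univ.filter (fun i : Fin (2 * ν) => ¬ (i : ℕ) < ν),
              (1 : ℚ) / (u i : ℚ) ^ k} : ℝ)
        ≤ C * (U : ℝ) ^ ((ν : ℝ) + ε) := by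
  intro ε hε
  set δ : ℝ := ε / (2 * ν + 1) ^ 2 with hδ_def
  have hδ : 0 < δ := by positivity
  obtain ⟨C, hC, hd⟩ := Nat.exists_card_divisors_le_mul_rpow hδ
  refine ⟨C ^ (2 * ν + 1), by positivity, fun U hU => ?_⟩
  have hcount := card_filter_sum_one_div_pow_eq_le (univ.filter fun i : Fin (2 * ν) => (i : ℕ) < ν)
    (by omega : k ≠ 0) U (by positivity)
    fun n hn => Nat.card_divisors_le_mul_rpow_of_mem_Icc hC.le hδ.le hd hn
  have hsqrt : (U ^ (2 * ν)).sqrt = U ^ ν := by rw [pow_mul', Nat.sqrt_eq']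
  rw [compl_filter, Fintype.card_fin, hsqrt, ← Nat.card_eq_finsetCard] at hcount
  have hexp : ((2 * ν : ℕ) : ℝ) * δ * (2 * ν + 1 : ℕ) ≤ ε := by
    calc ((2 * ν : ℕ) : ℝ) * δ * (2 * ν + 1 : ℕ) ≤ (2 * ν + 1) * δ * (2 * ν + 1) := by
          push_cast
          gcongr
          linarith
      _ = ε := by rw [hδ_def]; field_simp
  calc (Nat.card _ : ℝ) = _ :=
        congrArg Nat.cast (Nat.card_congr (Equiv.subtypeEquivRight fun u => by
          simp [Fintype.mem_piFinset]))
    _ ≤ _ := hcount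
    _ ≤ C ^ (2 * ν + 1) * (U : ℝ) ^ ((ν : ℝ) + ε) := by
        push_cast
        exact pow_mul_mul_rpow_pow_le (by exact_mod_cast hU) hC.le hexp

/-- `J_{k,ν}(U) ≤ C U^{ν+ε}`: the number of solutions of
`∑_{j≤ν} u_j^{-k} = ∑_{j>ν} u_j^{-k}` with `1 ≤ u_i ≤ U`. -/
theorem reciprocal_equation_count (k ν : ℕ) (hk : 2 ≤ k) (hν : 1 ≤ ν) :
    ∀ ε : ℝ, 0 < ε → ∃ C : ℝ, 0 < C ∧ ∀ U : ℕ, 1 ≤ U →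
      (Nat.card {u : Fin (2 * ν) → ℕ //
          (∀ i, 1 ≤ u i ∧ u i ≤ U) ∧
          ∑ i ∈ Finset.univ.filter (fun i : Fin (2 * ν) => (i : ℕ) < ν),
              (1 : ℚ) / (u i : ℚ) ^ k
            = ∑ i ∈ Finset.univ.filter (fun i : Fin (2 * ν) => ¬ (i : ℕ) < ν),
              (1 : ℚ) / (u i : ℚ) ^ k} : ℝ)
        ≤ C * (U : ℝ) ^ ((ν : ℝ) + ε) :=
  reciprocal_equation_count_general k ν hk
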